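/- Let H = Σ_{j=0}^N c_j t^j |x|^{2N−2j} h(x) with h harmonic homogeneous of degree ν ≥ 1. Then the heat operator applied to H equals Σ_{j=1}^N t^{j−1}|x|^{2N−2j} h(x)[ j c_j − c_{j−1}(2N−2j+2)(n+2N−2j+2ν) ]. Consequently H solves the heat equation if and only if the coefficients satisfy the recurrence j c_j = c_{j−1}(2N−2j+2)(n+2N−2j+2ν) for 1 ≤ j ≤ N. -/

import Mathlib

/-!
Write `r² = ∑ xᵢ²`. The product rule `Δ(fg) = Δf·g + 2∇f·∇g + f·Δg`, Euler's identity
`x·∇h = ν h` for `h` and for `r^{2m}`, and `Δh = 0` give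
`Δ(r^{2m+2} h) = 2(m+1)(n+2m+2ν) r^{2m} h`. This is pure algebra, so it is done with `pderiv`
on polynomials and carried over to `lap` once the Fréchet derivative of a polynomial function
is known. Applied termwise to `H`, and compared with `∂ₜH`, it gives the formula. For the
equivalence, fix `x` with `h(x) ≠ 0`; then `x ≠ 0` because `h(0) = 0` when `ν ≥ 1`, so every
`r^{2N-2j} h(x)` is nonzero and the brackets are the coefficients of a polynomial in `t` that
vanishes identically.
-/

noncomputable def lap {n : ℕ} (f : (Fin n → ℝ) → ℝ) (x : Fin n → ℝ) : ℝ :=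
  ∑ j, fderiv ℝ (fun y => fderiv ℝ f y (Pi.single j 1)) x (Pi.single j 1)

open Finset

namespace MvPolynomial

variable {σ : Type*} [Fintype σ]

section Algebra

variable {R : Type*} [CommSemiring R]

variable (σ R) in
noncomputable def laplacian : MvPolynomial σ R →ₗ[R] MvPolynomial σ R :=
  ∑ i, (pderiv i).toLinearMap ∘ₗ (pderiv i).toLinearMap

lemma laplacian_apply (p : MvPolynomial σ R) :
    laplacian σ R p = ∑ i, pderiv i (pderiv i p) := by
  simp [laplacian, LinearMap.sum_apply]

lemma laplacian_mul (p q : MvPolynomial σ R) :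
    laplacian σ R (p * q) =
      laplacian σ R p * q + 2 * ∑ i, pderiv i p * pderiv i q + p * laplacian σ R q := by
  simp only [laplacian_apply, sum_mul, mul_sum, ← sum_add_distrib]
  refine sum_congr rfl fun i _ => ?_
  simp only [Derivation.leibniz, map_add, smul_eq_mul]
  ring

variable (σ R) in
noncomputable def sqNorm : MvPolynomial σ R := ∑ i, X i ^ 2

lemma isHomogeneous_sqNorm : (sqNorm σ R).IsHomogeneous 2 :=
  IsHomogeneous.sum _ _ _ fun i _ => isHomogeneous_X_pow i 2

lemma pderiv_sqNorm (i : σ) : pderiv i (sqNorm σ R) = 2 * X i := by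
  classical
  simp [sqNorm, pderiv_X, Pi.single_apply]

lemma pderiv_sqNorm_pow_succ (i : σ) (m : ℕ) :
    pderiv i (sqNorm σ R ^ (m + 1)) = (2 * (m + 1)) • (X i * sqNorm σ R ^ m) := by
  rw [pderiv_pow, pderiv_sqNorm, Nat.add_sub_cancel, nsmul_eq_mul]
  push_cast
  ring

lemma laplacian_sqNorm_pow_succ (m : ℕ) :
    laplacian σ R (sqNorm σ R ^ (m + 1)) =
      (2 * (m + 1) * (Fintype.card σ + 2 * m)) • sqNorm σ R ^ m := by
  have euler := (isHomogeneous_sqNorm.pow m).sum_X_mul_pderiv (σ := σ) (R := R)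
  simp only [laplacian_apply, pderiv_sqNorm_pow_succ, map_nsmul, pderiv_mul, pderiv_X_self, one_mul,
    ← smul_sum, sum_add_distrib, sum_const, card_univ, euler]
  rw [← add_smul, smul_smul]

lemma sum_pderiv_sqNorm_pow_succ_mul_pderiv {ν : ℕ} {h : MvPolynomial σ R} (hh : h.IsHomogeneous ν)
    (m : ℕ) : ∑ i, pderiv i (sqNorm σ R ^ (m + 1)) * pderiv i h =
      (2 * (m + 1) * ν) • (sqNorm σ R ^ m * h) := by
  have factor :
      ∑ i, X i * sqNorm σ R ^ m * pderiv i h = sqNorm σ R ^ m * ∑ i, X i * pderiv i h := by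
    rw [mul_sum]
    exact sum_congr rfl fun i _ => by ring
  simp only [pderiv_sqNorm_pow_succ, smul_mul_assoc, ← smul_sum, factor,
    hh.sum_X_mul_pderiv, mul_smul_comm, smul_smul]

lemma laplacian_sqNorm_pow_succ_mul {ν : ℕ} {h : MvPolynomial σ R} (hh : h.IsHomogeneous ν)
    (hΔ : laplacian σ R h = 0) (m : ℕ) :
    laplacian σ R (sqNorm σ R ^ (m + 1) * h) =
      (2 * (m + 1) * (Fintype.card σ + 2 * m + 2 * ν)) • (sqNorm σ R ^ m * h) := by
  rw [laplacian_mul, laplacian_sqNorm_pow_succ, sum_pderiv_sqNorm_pow_succ_mul_pderiv hh, hΔ]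
  simp only [nsmul_eq_mul, mul_zero, add_zero]
  push_cast
  ring

end Algebra

section Analysis

variable {𝕜 : Type*} [NontriviallyNormedField 𝕜]

lemma hasFDerivAt_eval (p : MvPolynomial σ 𝕜) (x : σ → 𝕜) :
    HasFDerivAt (𝕜 := 𝕜) (fun y => eval y p)
      (∑ i, eval x (pderiv i p) • ContinuousLinearMap.proj i) x := by
  induction p using MvPolynomial.induction_on with
  | C a =>
    simp only [eval_C]
    refine (hasFDerivAt_const (𝕜 := 𝕜) a x).congr_fderiv ?_
    ext v
    simp
  | add p q hp hq =>
    simp only [map_add]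
    refine (hp.fun_add hq).congr_fderiv ?_
    ext v
    simp [add_mul, sum_add_distrib]
  | mul_X p i hp =>
    classical
    simp only [map_mul, eval_X]
    refine (hp.fun_mul (ContinuousLinearMap.proj i).hasFDerivAt).congr_fderiv ?_
    ext v
    simp [pderiv_X, Pi.single_apply, sum_add_distrib, add_mul, apply_ite, mul_sum, mul_assoc]

lemma fderiv_eval_apply_single [DecidableEq σ] (p : MvPolynomial σ 𝕜) (x : σ → 𝕜) (i : σ) :
    fderiv 𝕜 (fun y => eval y p) x (Pi.single i 1) = eval x (pderiv i p) := by
  simp [(hasFDerivAt_eval p x).fderiv, Pi.single_apply]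

end Analysis

end MvPolynomial

open MvPolynomial

lemma lap_eval {n : ℕ} (p : MvPolynomial (Fin n) ℝ) (x : Fin n → ℝ) :
    lap (fun y => eval y p) x = eval x (laplacian (Fin n) ℝ p) := by
  simp only [lap, fderiv_eval_apply_single, laplacian_apply, map_sum]

lemma hasDerivAt_sum_mul_pow_mul (s : Finset ℕ) (a b : ℕ → ℝ) (t : ℝ) :
    HasDerivAt (fun τ => ∑ j ∈ s, a j * τ ^ j * b j) (∑ j ∈ s, a j * (j * t ^ (j - 1)) * b j) t :=
  HasDerivAt.fun_sum fun j _ => ((hasDerivAt_pow j t).const_mul (a j)).mul_const (b j)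

lemma sum_Icc_one_eq_sum_range {M : Type*} [AddCommMonoid M] (f : ℕ → M) (N : ℕ) :
    ∑ j ∈ Icc 1 N, f j = ∑ j ∈ range N, f (j + 1) := by
  rw [range_eq_Ico, sum_Ico_add', ← Ico_add_one_right_eq_Icc, zero_add]

lemma eq_zero_of_forall_sum_pow_mul_eq_zero {R ι : Type*} [CommRing R] [IsDomain R] [Infinite R]
    {s : Finset ι} {e : ι → ℕ} (he : Set.InjOn e s) {a : ι → R}
    (h : ∀ t, ∑ k ∈ s, t ^ e k * a k = 0) {k : ι} (hk : k ∈ s) : a k = 0 := by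
  classical
  have hp : ∑ k ∈ s, Polynomial.C (a k) * Polynomial.X ^ e k = 0 :=
    Polynomial.funext fun t => by
      simp only [Polynomial.eval_finsetSum, Polynomial.eval_mul, Polynomial.eval_C,
        Polynomial.eval_pow, Polynomial.eval_X, Polynomial.eval_zero]
      rw [← h t]
      exact sum_congr rfl fun j _ => mul_comm _ _
  have hcoeff := congrArg (Polynomial.coeff · (e k)) hp
  simp only [Polynomial.finsetSum_coeff, Polynomial.coeff_C_mul_X_pow, Polynomial.coeff_zero]
    at hcoeff
  rwa [sum_eq_single_of_mem k hk fun j hj hjk => if_neg fun hej => hjk (he hj hk hej.symm),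
    if_pos rfl] at hcoeff

lemma lap_sum_mul_sum_sq_pow_mul {n ν : ℕ} {h : MvPolynomial (Fin n) ℝ} (hh : h.IsHomogeneous ν)
    (hΔ : laplacian (Fin n) ℝ h = 0) (N : ℕ) (a : ℕ → ℝ) (x : Fin n → ℝ) :
    lap (fun y => ∑ j ∈ range (N + 1), a j * (∑ i, y i ^ 2) ^ (N - j) * eval y h) x =
      ∑ j ∈ range N, a j * (2 * ((N : ℝ) - j) * (n + 2 * N - 2 * j - 2 + 2 * ν)) *
        (∑ i, x i ^ 2) ^ (N - (j + 1)) * eval x h := by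
  have hpoly : (fun y => ∑ j ∈ range (N + 1), a j * (∑ i, y i ^ 2) ^ (N - j) * eval y h) =
      fun y => eval y (∑ j ∈ range (N + 1), a j • (sqNorm (Fin n) ℝ ^ (N - j) * h)) := by
    funext y
    simp [sqNorm, mul_assoc]
  rw [hpoly, lap_eval, map_sum, sum_range_succ, Nat.sub_self, pow_zero, one_mul, map_smul, hΔ,
    smul_zero, add_zero, map_sum]
  refine sum_congr rfl fun j hj => ?_
  have hjN : j + 1 ≤ N := mem_range.1 hj
  rw [show N - j = N - (j + 1) + 1 by omega, map_smul, laplacian_sqNorm_pow_succ_mul hh hΔ]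
  simp [sqNorm, Nat.cast_sub hjN, Fintype.card_fin]
  ring

theorem deriv_sub_lap_sum_eq_sum_Icc {n ν : ℕ} {h : MvPolynomial (Fin n) ℝ}
    (hh : h.IsHomogeneous ν) (hΔ : laplacian (Fin n) ℝ h = 0) (N : ℕ) (c : ℕ → ℝ)
    (x : Fin n → ℝ) (t : ℝ) :
    deriv (fun s => ∑ j ∈ range (N + 1),
          c j * s ^ j * (∑ i, x i ^ 2) ^ (N - j) * eval x h) t
        - lap (fun y => ∑ j ∈ range (N + 1),
            c j * t ^ j * (∑ i, y i ^ 2) ^ (N - j) * eval y h) x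
      = ∑ j ∈ Icc 1 N,
          t ^ (j - 1) * (∑ i, x i ^ 2) ^ (N - j) * eval x h
            * ((j : ℝ) * c j
                - c (j - 1) * (2 * (N : ℝ) - 2 * j + 2) * ((n : ℝ) + 2 * N - 2 * j + 2 * ν)) := by
  have hderiv := (hasDerivAt_sum_mul_pow_mul (range (N + 1)) c
    (fun j => (∑ i, x i ^ 2) ^ (N - j) * eval x h) t).deriv
  simp only [← mul_assoc] at hderiv
  rw [hderiv, lap_sum_mul_sum_sq_pow_mul hh hΔ, sum_Icc_one_eq_sum_range, sum_range_succ']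
  simp only [Nat.cast_zero, zero_mul, mul_zero, add_zero, Nat.add_sub_cancel, ← sum_sub_distrib]
  refine sum_congr rfl fun j _ => ?_
  push_cast
  ring

lemma MvPolynomial.IsHomogeneous.exists_eval_ne_zero_and_ne_zero {σ R : Type*} [CommRing R]
    [IsDomain R] [Infinite R] {ν : ℕ} {h : MvPolynomial σ R} (hh : h.IsHomogeneous ν) (hν : ν ≠ 0)
    (hne : h ≠ 0) : ∃ x : σ → R, eval x h ≠ 0 ∧ x ≠ 0 := by
  obtain ⟨x, hx⟩ : ∃ x, eval x h ≠ 0 := by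
    by_contra! h0
    exact hne (MvPolynomial.funext fun x => by simpa using h0 x)
  refine ⟨x, hx, fun hx0 => hx ?_⟩
  rw [hx0, eval_zero, constantCoeff_eq]
  exact hh.coeff_eq_zero (by simpa using hν.symm)

theorem heat_polynomial_recurrence_general (n ν N : ℕ) (hν : 1 ≤ ν)
    (h : MvPolynomial (Fin n) ℝ) (hne : h ≠ 0) (hhom : h.IsHomogeneous ν)
    (hharm : ∀ x : Fin n → ℝ, lap (fun y => MvPolynomial.eval y h) x = 0)
    (c : ℕ → ℝ) :
    (∀ (x : Fin n → ℝ) (t : ℝ),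
      deriv (fun s => ∑ j ∈ Finset.range (N + 1),
          c j * s ^ j * (∑ i, x i ^ 2) ^ (N - j) * MvPolynomial.eval x h) t
        - lap (fun y => ∑ j ∈ Finset.range (N + 1),
            c j * t ^ j * (∑ i, y i ^ 2) ^ (N - j) * MvPolynomial.eval y h) x
      = ∑ j ∈ Finset.Icc 1 N,
          t ^ (j - 1) * (∑ i, x i ^ 2) ^ (N - j) * MvPolynomial.eval x h
            * ((j : ℝ) * c j
                - c (j - 1) * (2 * (N : ℝ) - 2 * j + 2) * ((n : ℝ) + 2 * N - 2 * j + 2 * ν)))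
    ∧ ((∀ (x : Fin n → ℝ) (t : ℝ),
        deriv (fun s => ∑ j ∈ Finset.range (N + 1),
            c j * s ^ j * (∑ i, x i ^ 2) ^ (N - j) * MvPolynomial.eval x h) t
          - lap (fun y => ∑ j ∈ Finset.range (N + 1),
              c j * t ^ j * (∑ i, y i ^ 2) ^ (N - j) * MvPolynomial.eval y h) x = 0)
      ↔ (∀ j : ℕ, 1 ≤ j → j ≤ N →
          (j : ℝ) * c j
            = c (j - 1) * (2 * (N : ℝ) - 2 * j + 2) * ((n : ℝ) + 2 * N - 2 * j + 2 * ν))) := by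
  have hΔ : laplacian (Fin n) ℝ h = 0 :=
    MvPolynomial.funext fun x => by rw [map_zero, ← lap_eval, hharm]
  have key := deriv_sub_lap_sum_eq_sum_Icc hhom hΔ N c
  refine ⟨key, fun hheat j hj1 hjN => ?_, fun hrec x t => ?_⟩
  · obtain ⟨x, hx, hx0⟩ :=
      hhom.exists_eval_ne_zero_and_ne_zero (Nat.one_le_iff_ne_zero.mp hν) hne
    have hS : ∑ i, x i ^ 2 ≠ 0 := fun hS => hx0 <| funext fun i =>
      pow_eq_zero_iff two_ne_zero |>.1 <|
        (sum_eq_zero_iff_of_nonneg fun i _ => sq_nonneg (x i)).1 hS i (mem_univ i)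
    have hcoeff := eq_zero_of_forall_sum_pow_mul_eq_zero (s := Icc 1 N) (e := (· - 1))
      (fun i hi j hj (hij : i - 1 = j - 1) => by simp only [coe_Icc, Set.mem_Icc] at hi hj; omega)
      (fun t => by simpa only [mul_assoc] using (key x t).symm.trans (hheat x t))
      (mem_Icc.2 ⟨hj1, hjN⟩)
    simp only [mul_eq_zero, pow_eq_zero_iff', hS, hx, false_or, false_and, sub_eq_zero] at hcoeff
    rw [hcoeff, mul_assoc]
  · rw [key]
    exact sum_eq_zero fun j hj => by
      rw [hrec j (mem_Icc.1 hj).1 (mem_Icc.1 hj).2, sub_self, mul_zero]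

/-- For H = Σ_{j=0}^N c_j t^j |x|^{2N−2j} h(x) with h a nonzero harmonic polynomial
homogeneous of degree ν ≥ 1, the heat operator applied to H equals
Σ_{j=1}^N t^{j−1}|x|^{2N−2j} h(x)[ j c_j − c_{j−1}(2N−2j+2)(n+2N−2j+2ν) ]; consequently
H solves the heat equation iff j c_j = c_{j−1}(2N−2j+2)(n+2N−2j+2ν) for 1 ≤ j ≤ N. -/
theorem heat_polynomial_recurrence (n ν N : ℕ) (hn : 1 ≤ n) (hν : 1 ≤ ν) (hN : 1 ≤ N)
    (h : MvPolynomial (Fin n) ℝ) (hne : h ≠ 0) (hhom : h.IsHomogeneous ν)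
    (hharm : ∀ x : Fin n → ℝ, lap (fun y => MvPolynomial.eval y h) x = 0)
    (c : ℕ → ℝ) :
    (∀ (x : Fin n → ℝ) (t : ℝ),
      deriv (fun s => ∑ j ∈ Finset.range (N + 1),
          c j * s ^ j * (∑ i, x i ^ 2) ^ (N - j) * MvPolynomial.eval x h) t
        - lap (fun y => ∑ j ∈ Finset.range (N + 1),
            c j * t ^ j * (∑ i, y i ^ 2) ^ (N - j) * MvPolynomial.eval y h) x
      = ∑ j ∈ Finset.Icc 1 N,
          t ^ (j - 1) * (∑ i, x i ^ 2) ^ (N - j) * MvPolynomial.eval x h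
            * ((j : ℝ) * c j
                - c (j - 1) * (2 * (N : ℝ) - 2 * j + 2) * ((n : ℝ) + 2 * N - 2 * j + 2 * ν)))
    ∧ ((∀ (x : Fin n → ℝ) (t : ℝ),
        deriv (fun s => ∑ j ∈ Finset.range (N + 1),
            c j * s ^ j * (∑ i, x i ^ 2) ^ (N - j) * MvPolynomial.eval x h) t
          - lap (fun y => ∑ j ∈ Finset.range (N + 1),
              c j * t ^ j * (∑ i, y i ^ 2) ^ (N - j) * MvPolynomial.eval y h) x = 0)
      ↔ (∀ j : ℕ, 1 ≤ j → j ≤ N →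
          (j : ℝ) * c j
            = c (j - 1) * (2 * (N : ℝ) - 2 * j + 2) * ((n : ℝ) + 2 * N - 2 * j + 2 * ν))) :=
  heat_polynomial_recurrence_general n ν N hν h hne hhom hharm c
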